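/- arXiv:1510.07216 — 3 statements merged into one kernel-verified Lean document; each statement's English description precedes it below -/
import Mathlib

section
/- Let (Γ, α, ∇) be a connected m-valent GKM graph and let 𝒜(Γ, α, ∇) be its group of axial functions. Then for any vertex p, the restriction map ρ_p : 𝒜(Γ, α, ∇) → ℤ^m defined by ρ_p(f) = f(p) is an injective group homomorphism; in particular rk 𝒜(Γ, α, ∇) ≤ m. -/
/-- The combinatorial core of an `m`-valent graph: oriented edges with reversal,
orderings of the `m` outgoing edges at each vertex, and a connection. -/
structure GKMCore (V E : Type*) (m : ℕ) where
  src : E → V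
  tgt : E → V
  rev : E → E
  rev_rev : ∀ e, rev (rev e) = e
  src_rev : ∀ e, src (rev e) = tgt e
  no_loops : ∀ e, src e ≠ tgt e
  /-- the `j`-th outgoing edge at vertex `p` -/
  ord : V → Fin m → E
  ord_src : ∀ p j, src (ord p j) = p
  /-- the index of an edge among the outgoing edges at its source -/
  eidx : E → Fin m
  ord_eidx : ∀ e, ord (src e) (eidx e) = e
  eidx_ord : ∀ p j, eidx (ord p j) = j
  /-- the connection: `conn e` maps outgoing edges at `src e` to outgoing edges at `tgt e` -/
  conn : E → E → E
  conn_src : ∀ e e', src e' = src e → src (conn e e') = tgt e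
  conn_self : ∀ e, conn e e = rev e
  conn_conn : ∀ e e', src e' = src e → conn (rev e) (conn e e') = e'

namespace GKMCore

variable {V E : Type*} {m : ℕ}

/-- The permutation of `Fin m` induced by the connection along `e`:
`σ_e` is characterized by `∇_e (e_{σ(j), src e}) = e_{j, tgt e}`. -/
def sigma (C : GKMCore V E m) (e : E) (j : Fin m) : Fin m :=
  C.eidx (C.conn (C.rev e) (C.ord (C.tgt e) j))

/-- Adjacency of vertices through an oriented edge. -/
def Adj (C : GKMCore V E m) (p q : V) : Prop := ∃ e, C.src e = p ∧ C.tgt e = q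

/-- Connectedness of the graph. -/
def Connected (C : GKMCore V E m) : Prop := ∀ p q, Relation.ReflTransGen C.Adj p q

end GKMCore

/-- An axial function with values in `ℤⁿ ≅ H²(BTⁿ)` on the core `C`, compatible
with the connection `C.conn` via (given) congruence coefficients: this is the
data of a GKM graph of type `(m, n)` (effectiveness stated separately). -/
structure AxialOn {V E : Type*} {m : ℕ} (C : GKMCore V E m) (n : ℕ) where
  α : E → Fin n → ℤ
  α_rev : ∀ e, α (C.rev e) = - α e
  α_ne : ∀ e, α e ≠ 0
  pairwise_indep : ∀ e e', C.src e = C.src e' → e ≠ e' → LinearIndependent ℤ ![α e, α e']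
  /-- the congruence coefficients `c_e(e')` -/
  coeff : E → E → ℤ
  congruence : ∀ e e', C.src e' = C.src e → α (C.conn e e') = α e' + coeff e e' • α e

namespace AxialOn

variable {V E : Type*} {m n : ℕ} {C : GKMCore V E m}

/-- Effectiveness: at every vertex the values of the axial function span `ℤⁿ`. -/
def Effective (A : AxialOn C n) : Prop :=
  ∀ p, Submodule.span ℤ (Set.range fun j => A.α (C.ord p j)) = ⊤

/-- The invariant function `c : E(Γ) → ℤ^m`, the vector of congruence
coefficients of `e` on the (ordered) outgoing edges at `src e`. -/
def cvec (A : AxialOn C n) (e : E) : Fin m → ℤ := fun j => A.coeff e (C.ord (C.src e) j)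

/-- `A'` is an extension of `A` (same graph, same connection) via a surjective
linear projection `π` with `π ∘ α' = α`. -/
def Extends {l : ℕ} (A' : AxialOn C l) (A : AxialOn C n) : Prop :=
  ∃ π : (Fin l → ℤ) →ₗ[ℤ] (Fin n → ℤ), Function.Surjective π ∧ ∀ e, π (A'.α e) = A.α e

/-- The defining relation of the group of axial functions:
`N_e (f (src e)) - f (tgt e) = f (tgt e)_{ē} • c(ē)` for every edge `e`. -/
def IsAxialClass (A : AxialOn C n) (f : V → Fin m → ℤ) : Prop :=
  ∀ e j, f (C.src e) (C.sigma e j) - f (C.tgt e) j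
      = f (C.tgt e) (C.eidx (C.rev e)) * A.cvec (C.rev e) j

/-- The group of axial functions `𝒜(Γ, α, ∇)` as a `ℤ`-submodule of
`⊕_{p ∈ V(Γ)} ℤ^m`. -/
def axialModule (A : AxialOn C n) : Submodule ℤ (V → Fin m → ℤ) where
  carrier := {f | A.IsAxialClass f}
  zero_mem' := by intro e j; simp [IsAxialClass, cvec]
  add_mem' := by
    intro f g hf hg e j
    have h1 := hf e j
    have h2 := hg e j
    simp only [Pi.add_apply]
    linear_combination h1 + h2
  smul_mem' := by
    intro a f hf e j
    have h1 := hf e j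
    simp only [Pi.smul_apply, smul_eq_mul]
    linear_combination a * h1

end AxialOn

section Aux

variable {V E : Type*} {m n : ℕ} {C : GKMCore V E m}

lemma GKMCore.tgt_rev (C : GKMCore V E m) (e : E) : C.tgt (C.rev e) = C.src e := by
  conv_rhs => rw [← C.rev_rev e]
  rw [C.src_rev]

lemma coeff_self (A : AxialOn C n) (e : E) : A.coeff e e = -2 := by
  have h := A.congruence e e rfl
  rw [C.conn_self, A.α_rev] at h
  obtain ⟨i, hi⟩ := Function.ne_iff.mp (A.α_ne e)
  have := congrFun h i
  simp only [Pi.neg_apply, Pi.add_apply, Pi.smul_apply, smul_eq_mul] at this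
  have h2 : (A.coeff e e + 2) * A.α e i = 0 := by linarith
  rcases mul_eq_zero.mp h2 with h3 | h3
  · linarith
  · exact absurd h3 hi

lemma cvec_rev_eidx (A : AxialOn C n) (e : E) :
    A.cvec (C.rev e) (C.eidx (C.rev e)) = -2 := by
  unfold AxialOn.cvec
  rw [C.ord_eidx, coeff_self]

lemma propagate (A : AxialOn C n) {f : V → Fin m → ℤ} (hf : A.IsAxialClass f)
    (e : E) (h0 : f (C.src e) = 0) : f (C.tgt e) = 0 := by
  have hk := hf e (C.eidx (C.rev e))
  rw [h0, cvec_rev_eidx] at hk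
  simp only [Pi.zero_apply] at hk
  have hk0 : f (C.tgt e) (C.eidx (C.rev e)) = 0 := by linarith
  funext j
  have hj := hf e j
  rw [h0, hk0] at hj
  simp only [Pi.zero_apply, zero_mul, zero_sub, neg_eq_zero] at hj
  exact hj

end Aux

/-- For a connected m-valent GKM graph, the restriction map
`ρ_p : 𝒜(Γ,α,∇) → ℤ^m`, `f ↦ f p`, is an injective (linear, hence group)
homomorphism for every vertex `p`; in particular `rk 𝒜(Γ,α,∇) ≤ m`. -/
theorem restriction_map_injective_and_rank_le
    {V E : Type*} [Fintype V] [Fintype E] {m n : ℕ}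
    (C : GKMCore V E m) (hconn : C.Connected) (A : AxialOn C n) (p : V) :
    Function.Injective
      ((LinearMap.proj p : (V → Fin m → ℤ) →ₗ[ℤ] (Fin m → ℤ)).comp
        A.axialModule.subtype) ∧
    Module.finrank ℤ A.axialModule ≤ m := by
  have key : ∀ f, A.IsAxialClass f → f p = 0 → f = 0 := by
    intro f hf hp
    funext q
    have hq := hconn p q
    induction hq with
    | refl => exact hp
    | tail _ hadj ih =>
      obtain ⟨e, hs, ht⟩ := hadj
      have := propagate A hf e (hs ▸ ih)
      rwa [ht] at this
  have hinj : Function.Injective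
      ((LinearMap.proj p : (V → Fin m → ℤ) →ₗ[ℤ] (Fin m → ℤ)).comp
        A.axialModule.subtype) := by
    rw [← LinearMap.ker_eq_bot, LinearMap.ker_eq_bot']
    rintro ⟨f, hf⟩ h
    have hp : f p = 0 := h
    exact Subtype.ext (key f hf hp)
  refine ⟨hinj, ?_⟩
  calc Module.finrank ℤ A.axialModule
      ≤ Module.finrank ℤ (Fin m → ℤ) :=
        LinearMap.finrank_le_finrank_of_injective hinj
    _ = m := by simp
end

section
/- Consider the triangle GKM graph Γ: the complete graph K₃ with vertices p, q, r, axial function into ℤ² with basis a, b given by α(pq) = a, α(qr) = −a+b, α(rp) = −b (and negatives on reversed edges), and the unique connection. Then its group of axial functions 𝒜(Γ, α, ∇) is isomorphic to ℤ², and in particular this GKM graph admits no extension to a (2,ℓ)-type GKM graph with ℓ > 2. -/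
/-! The triangle GKM graph: the complete graph `K₃` with vertices `0, 1, 2`
(`p, q, r`), the GKM graph of `ℂP²` with the standard `T²`-action. -/

/-- Oriented edges of `K₃`: ordered pairs of distinct vertices. -/
def TriE : Type := {x : ZMod 3 × ZMod 3 // x.1 ≠ x.2}

instance : Fintype TriE := by unfold TriE; infer_instance
instance : DecidableEq TriE := by unfold TriE; infer_instance

def triRev (e : TriE) : TriE := ⟨(e.1.2, e.1.1), e.2.symm⟩

def triOrd (p : ZMod 3) (j : Fin 2) : TriE :=
  ⟨(p, p + ((j : ℕ) : ZMod 3) + 1), by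
    have : ∀ (p : ZMod 3) (j : Fin 2), p ≠ p + ((j : ℕ) : ZMod 3) + 1 := by decide
    exact this p j⟩

def triEidx (e : TriE) : Fin 2 := if e.1.2 = e.1.1 + 1 then 0 else 1

def triConn (e e' : TriE) : TriE :=
  if h : e'.1.2 = e.1.2 then triRev e
  else ⟨(e.1.2, e'.1.2), fun hh => h hh.symm⟩

/-- The combinatorial core of the triangle graph `K₃`. -/
def triCore : GKMCore (ZMod 3) TriE 2 where
  src e := e.1.1
  tgt e := e.1.2
  rev := triRev
  rev_rev := by decide
  src_rev := by decide
  no_loops e := e.2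
  ord := triOrd
  ord_src := by decide
  eidx := triEidx
  ord_eidx := by decide
  eidx_ord := by decide
  conn := triConn
  conn_src := by decide
  conn_self := by decide
  conn_conn := by decide

/-- The moment map values: `w 0 = 0`, `w 1 = a = (1,0)`, `w 2 = (0,1)`, so that
`α(pq) = a`, `α(qr) = −a + b`, `α(rp) = −b` where `b = (0,1)`. -/
def triW (p : ZMod 3) : Fin 2 → ℤ := ![![0, 0], ![1, 0], ![0, 1]] ⟨p.val, p.val_lt⟩

/-! Along an edge `e` of the triangle the connection sends `e` to `ē` and the other edge at
`src e` to the other edge at `tgt e`, so the weights force the congruence coefficients `-2` on `e`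
and `-1` on the other edge. The axial relations along the two edges leaving vertex `0` then
determine an axial function from its value at `0`, and every value at `0` extends, so evaluation
at `0` is an isomorphism onto `ℤ²`. An extension of type `(2, ℓ)` must be effective, but two
vectors cannot span `ℤ^ℓ` for `ℓ > 2`. -/

namespace AxialOn

variable {V E : Type*} {m n : ℕ} {C : GKMCore V E m}

theorem coeff_eq_of_congruence (A : AxialOn C n) {e e' : E} (h : C.src e' = C.src e) {c : ℤ}
    (hc : A.α (C.conn e e') = A.α e' + c • A.α e) : A.coeff e e' = c := by
  rw [A.congruence e e' h] at hc
  exact smul_left_injective ℤ (A.α_ne e) (add_left_cancel hc)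

theorem le_of_effective (A : AxialOn C n) (hA : A.Effective) (p : V) : n ≤ m := by
  have hspan := finrank_range_le_card (R := ℤ) fun j => A.α (C.ord p j)
  rwa [Set.finrank, hA p, finrank_top, Module.finrank_fin_fun, Fintype.card_fin] at hspan

end AxialOn

section Triangle

open Matrix

def HasTriangleWeights (A : AxialOn triCore 2) : Prop :=
  ∀ e : TriE, A.α e = fun t => triW e.1.2 t - triW e.1.1 t

variable (A : AxialOn triCore 2)

theorem triangle_coeff (hα : HasTriangleWeights A) (e e' : TriE)
    (h : e'.1.1 = e.1.1) : A.coeff e e' = if e' = e then -2 else -1 := by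
  have hcongr : ∀ e e' : TriE, e'.1.1 = e.1.1 →
      (fun t => triW (triConn e e').1.2 t - triW (triConn e e').1.1 t) =
        (fun t => triW e'.1.2 t - triW e'.1.1 t) +
          (if e' = e then (-2 : ℤ) else -1) • fun t => triW e.1.2 t - triW e.1.1 t := by
    decide
  refine A.coeff_eq_of_congruence h ?_
  rw [hα, hα, hα]
  exact hcongr e e' h

theorem triangle_cvec (hα : HasTriangleWeights A) (e : TriE) (j : Fin 2) :
    A.cvec e j = if triCore.ord (triCore.src e) j = e then -2 else -1 :=
  triangle_coeff A hα e _ rfl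

/-- The axial function with value `v` at vertex `0` takes the value `triMat p *ᵥ v` at `p`. -/
def triMat : ZMod 3 → Matrix (Fin 2) (Fin 2) ℤ :=
  ![!![1, 0; 0, 1], !![-1, 1; -1, 0], !![0, -1; 1, -1]]

theorem triMat_zero : triMat 0 = 1 := by
  decide

theorem triMat_rows (e : TriE) (j : Fin 2) :
    triMat (triCore.src e) (triCore.sigma e j) - triMat (triCore.tgt e) j =
      (if triCore.ord (triCore.src (triCore.rev e)) j = triCore.rev e then (-2 : ℤ) else -1) •
        triMat (triCore.tgt e) (triCore.eidx (triCore.rev e)) := by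
  revert e j
  decide

theorem triMat_mulVec_mem (hα : HasTriangleWeights A) (v : Fin 2 → ℤ) :
    (fun p => triMat p *ᵥ v) ∈ A.axialModule := by
  intro e j
  simp only [mulVec, triangle_cvec A hα, ← sub_dotProduct, triMat_rows, smul_dotProduct,
    smul_eq_mul, mul_comm]

theorem triangle_eq_mulVec (hα : HasTriangleWeights A)
    {f : ZMod 3 → Fin 2 → ℤ} (hf : f ∈ A.axialModule) (p : ZMod 3) :
    f p = triMat p *ᵥ f 0 := by
  have hf' : ∀ e j, f (triCore.src e) (triCore.sigma e j) - f (triCore.tgt e) j =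
      f (triCore.tgt e) (triCore.eidx (triCore.rev e)) *
        if triCore.ord (triCore.src (triCore.rev e)) j = triCore.rev e then -2 else -1 := by
    intro e j
    rw [← triangle_cvec A hα]
    exact hf e j
  have h01 : f 0 1 - f 1 0 = f 1 1 * -1 := hf' ⟨(0, 1), by decide⟩ 0
  have h01' : f 0 0 - f 1 1 = f 1 1 * -2 := hf' ⟨(0, 1), by decide⟩ 1
  have h02 : f 0 1 - f 2 0 = f 2 0 * -2 := hf' ⟨(0, 2), by decide⟩ 0
  have h02' : f 0 0 - f 2 1 = f 2 0 * -1 := hf' ⟨(0, 2), by decide⟩ 1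
  funext t
  obtain rfl | rfl | rfl : p = 0 ∨ p = 1 ∨ p = 2 := by revert p; decide
  all_goals fin_cases t <;>
    simp only [triMat, mulVec, dotProduct, Fin.sum_univ_two, of_apply, cons_val, cons_val',
      cons_val_zero, cons_val_one, cons_val_fin_one, Fin.zero_eta, Fin.mk_one, Fin.isValue] <;>
    linarith

def triangleAxialEquiv (hα : HasTriangleWeights A) : A.axialModule ≃ₗ[ℤ] (Fin 2 → ℤ) where
  toFun f := f.1 0
  map_add' _ _ := rfl
  map_smul' _ _ := rfl
  invFun v := ⟨fun p => triMat p *ᵥ v, triMat_mulVec_mem A hα v⟩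
  left_inv f := Subtype.ext (funext fun p => (triangle_eq_mulVec A hα f.2 p).symm)
  right_inv v := by
    change triMat 0 *ᵥ v = v
    rw [triMat_zero, one_mulVec]

end Triangle

/-- for the triangle GKM graph (K₃ with `α(pq) = a`,
`α(qr) = −a+b`, `α(rp) = −b` and the unique connection), the group of axial
functions is isomorphic to `ℤ²`; in particular it admits no extension to a
(2,ℓ)-type GKM graph with `ℓ > 2`. -/
theorem triangle_axialModule_rank_two
    (A : AxialOn triCore 2)
    (hα : ∀ e : TriE, A.α e = fun t => triW e.1.2 t - triW e.1.1 t) :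
    Nonempty (A.axialModule ≃ₗ[ℤ] (Fin 2 → ℤ)) ∧
    ∀ l, 2 < l → ¬∃ A' : AxialOn triCore l, A'.Effective ∧ A'.Extends A := by
  refine ⟨⟨triangleAxialEquiv A hα⟩, fun l hl ⟨A', hA', _⟩ => ?_⟩
  exact absurd (A'.le_of_effective hA' 0) (by omega)
end

section
/- Let (Γₙ, α_n, ∇ₙ) be the GKM graph of the complex Grassmannian G₂(ℂ^{n+2}) (Johnson graph J(n+2,2) with the standard axial function into ℤ^{n+1} and its unique connection), n ≥ 1. Then the group of axial functions 𝒜(Γₙ, α_n, ∇ₙ) is isomorphic to ℤ^{n+1}. -/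
/-! The Johnson graph `J(n+2, 2)`, the GKM graph of the complex Grassmannian
`G₂(ℂ^{n+2})` with the standard effective `T^{n+1}`-action. -/

/-- Vertices: 2-element subsets of `[n+2]`. -/
def JV (n : ℕ) : Type := {s : Finset (Fin (n + 2)) // s.card = 2}

/-- Oriented edges: ordered pairs of distinct intersecting 2-subsets. -/
def JE (n : ℕ) : Type :=
  {x : JV n × JV n // x.1 ≠ x.2 ∧ (x.1.1 ∩ x.2.1).Nonempty}

/-- The vertex `{i, j}`. -/
def mkV {n : ℕ} (i j : Fin (n + 2)) (h : i ≠ j) : JV n :=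
  ⟨{i, j}, Finset.card_pair h⟩

/-- The oriented edge `E_{i,j}^{i,k}` from `{i, j}` to `{i, k}`. -/
def mkE {n : ℕ} (i j k : Fin (n + 2)) (hij : i ≠ j) (hik : i ≠ k) (hjk : j ≠ k) :
    JE n :=
  ⟨(mkV i j hij, mkV i k hik), by
    constructor
    · intro h
      have h2 : ({i, j} : Finset (Fin (n + 2))) = {i, k} :=
        congrArg Subtype.val h
      have hj : j ∈ ({i, k} : Finset (Fin (n + 2))) := by
        rw [← h2]; simp
      simp only [Finset.mem_insert, Finset.mem_singleton] at hj
      rcases hj with h1 | h1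
      · exact hij h1.symm
      · exact hjk h1
    · exact ⟨i, by simp [mkV]⟩⟩

/-- The vectors `a₁, …, a_{n+1}, a_{n+2}` in `ℤ^{n+1}`: `a₁, …, a_{n+1}` a
basis `B` and `a_{n+2} = 0`. -/
noncomputable def avec {n : ℕ} (B : Module.Basis (Fin (n + 1)) ℤ (Fin (n + 1) → ℤ))
    (k : Fin (n + 2)) : Fin (n + 1) → ℤ :=
  if h : (k : ℕ) < n + 1 then B ⟨k, h⟩ else 0

/-! A linear form `φ` on `ℤ^{n+1}` gives the axial function `e ↦ φ (α e)`, since the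
congruence relations of `α` are exactly the relations defining `𝒜` read on oriented edges;
this is injective because the values of `α` span `ℤ^{n+1}`. Conversely, for the
Grassmannian the connection makes an edge function `g` in `𝒜` independent of the anchor
(`g (E_{k,i}^{k,l}) = g (E_{j,i}^{j,l})`, congruence coefficient `0`) and a cocycle
(`g (E_{k,i}^{k,j}) = g (E_{j,i}^{j,k}) - g (E_{i,j}^{i,k})`, coefficient `-1`), so `g` is
determined by its values on the edges `E_{a,n+2}^{a,k}`, where `α = a_k`; the linear form
taking these values reproduces `g`. Hence `𝒜 ≅ Hom(ℤ^{n+1}, ℤ) ≅ ℤ^{n+1}`. -/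

namespace GKMCore

variable {V E : Type*} {m : ℕ} (C : GKMCore V E m)

theorem tgt_rev_s14 (e : E) : C.tgt (C.rev e) = C.src e := by
  rw [← C.src_rev, C.rev_rev]

theorem ord_eidx_of_src_eq {e e' : E} (h : C.src e' = C.src e) :
    C.ord (C.src e) (C.eidx e') = e' := by
  rw [← h, C.ord_eidx]

def edgeEquiv : (V → Fin m → ℤ) ≃ₗ[ℤ] (E → ℤ) where
  toFun f e := f (C.src e) (C.eidx e)
  invFun g p j := g (C.ord p j)
  map_add' _ _ := rfl
  map_smul' _ _ := rfl
  left_inv f := by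
    funext p j
    simp only [C.ord_src, C.eidx_ord]
  right_inv g := by
    funext e
    simp only [C.ord_eidx]

end GKMCore

namespace AxialOn

variable {V E : Type*} {m n : ℕ} {C : GKMCore V E m} (A : AxialOn C n)

theorem mem_axialModule {f : V → Fin m → ℤ} : f ∈ A.axialModule ↔ A.IsAxialClass f :=
  Iff.rfl

def IsEdgeAxial (g : E → ℤ) : Prop :=
  ∀ e e', C.src e' = C.src e → g (C.conn e e') = g e' + g e * A.coeff e e'

theorem isAxialClass_iff_isEdgeAxial (f : V → Fin m → ℤ) :
    A.IsAxialClass f ↔ A.IsEdgeAxial (C.edgeEquiv f) := by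
  constructor
  · intro h e e' hs
    have h' := h (C.rev e) (C.eidx e')
    simp only [GKMCore.sigma, cvec, C.rev_rev, C.src_rev, C.tgt_rev_s14,
      C.ord_eidx_of_src_eq hs] at h'
    change f (C.src (C.conn e e')) _ = f (C.src e') _ + f (C.src e) _ * _
    rw [C.conn_src e e' hs, hs]
    linarith
  · intro h e j
    have hs : C.src (C.ord (C.tgt e) j) = C.src (C.rev e) := by rw [C.ord_src, C.src_rev]
    have h' := h (C.rev e) (C.ord (C.tgt e) j) hs
    change f (C.src (C.conn _ _)) _ = f (C.src (C.ord _ _)) _ + f (C.src (C.rev e)) _ * _ at h'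
    simp only [C.conn_src _ _ hs, C.tgt_rev_s14, C.src_rev, C.ord_src, C.eidx_ord] at h'
    simp only [GKMCore.sigma, cvec, C.src_rev]
    linarith

variable {A}

theorem IsEdgeAxial.sub {g h : E → ℤ} (hg : A.IsEdgeAxial g) (hh : A.IsEdgeAxial h) :
    A.IsEdgeAxial (g - h) := by
  intro e e' hs
  simp only [Pi.sub_apply, hg e e' hs, hh e e' hs]
  ring

theorem coeff_eq_of_α_conn {e e' : E} (hs : C.src e' = C.src e) {c : ℤ}
    (hc : A.α (C.conn e e') = A.α e' + c • A.α e) : A.coeff e e' = c :=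
  smul_left_injective ℤ (A.α_ne e) (add_left_cancel ((A.congruence e e' hs).symm.trans hc))

theorem IsEdgeAxial.apply_conn_of_α_conn {g : E → ℤ} (hg : A.IsEdgeAxial g) {e e' : E}
    (hs : C.src e' = C.src e) {c : ℤ} (hc : A.α (C.conn e e') = A.α e' + c • A.α e) :
    g (C.conn e e') = g e' + g e * c := by
  rw [hg e e' hs, coeff_eq_of_α_conn hs hc]

variable (A)

theorem isEdgeAxial_dual_comp (φ : Module.Dual ℤ (Fin n → ℤ)) :
    A.IsEdgeAxial fun e => φ (A.α e) := by
  intro e e' hs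
  dsimp only
  rw [A.congruence e e' hs, map_add, map_smul, smul_eq_mul, mul_comm]

def axialOfDual : Module.Dual ℤ (Fin n → ℤ) →ₗ[ℤ] A.axialModule where
  toFun φ := ⟨C.edgeEquiv.symm fun e => φ (A.α e), by
    rw [mem_axialModule, isAxialClass_iff_isEdgeAxial, LinearEquiv.apply_symm_apply]
    exact A.isEdgeAxial_dual_comp φ⟩
  map_add' _ _ := rfl
  map_smul' _ _ := rfl

theorem axialOfDual_injective (hspan : Submodule.span ℤ (Set.range A.α) = ⊤) :
    Function.Injective A.axialOfDual := by
  rw [← LinearMap.ker_eq_bot, LinearMap.ker_eq_bot']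
  intro φ hφ
  have hα : (fun e => φ (A.α e)) = 0 := by
    apply C.edgeEquiv.symm.injective
    rw [map_zero]
    exact congrArg Subtype.val hφ
  exact LinearMap.ext_on_range hspan fun e => congrFun hα e

end AxialOn

theorem Finset.exists_eq_pair_of_card_eq_two {α : Type*} [DecidableEq α] {s : Finset α} {i : α}
    (hs : s.card = 2) (hi : i ∈ s) : ∃ j, i ≠ j ∧ s = {i, j} := by
  obtain ⟨j, hj⟩ := Finset.card_eq_one.1 (by rw [Finset.card_erase_of_mem hi, hs])
  refine ⟨j, ?_, by rw [← Finset.insert_erase hi, hj]⟩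
  exact (Finset.ne_of_mem_erase (hj ▸ Finset.mem_singleton_self j)).symm

theorem JE.exists_eq_mkE {n : ℕ} (e : JE n) :
    ∃ i j k, ∃ (hij : i ≠ j) (hik : i ≠ k) (hjk : j ≠ k), e = mkE i j k hij hik hjk := by
  obtain ⟨⟨⟨p, hp⟩, ⟨q, hq⟩⟩, hpq, i, hi⟩ := e
  rw [Finset.mem_inter] at hi
  obtain ⟨j, hij, rfl⟩ := Finset.exists_eq_pair_of_card_eq_two hp hi.1
  obtain ⟨k, hik, rfl⟩ := Finset.exists_eq_pair_of_card_eq_two hq hi.2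
  refine ⟨i, j, k, hij, hik, ?_, rfl⟩
  rintro rfl
  exact hpq rfl

/-- `h₂` and `h₃` force `g (E_{i,j}^{i,k}) = x k - x j` with `x k = g (E_{a,n+2}^{a,k})`. -/
theorem JE.eq_zero_of_relations {n : ℕ} {g : JE n → ℤ}
    (h₂ : ∀ (i j k l : Fin (n + 2)) (hij : i ≠ j) (hik : i ≠ k) (hil : i ≠ l) (hjl : j ≠ l)
      (hkl : k ≠ l),
      g (mkE k i l (Ne.symm hik) hkl hil) = g (mkE j i l (Ne.symm hij) hjl hil))
    (h₃ : ∀ (i j k : Fin (n + 2)) (hij : i ≠ j) (hik : i ≠ k) (hjk : j ≠ k),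
      g (mkE k i j (Ne.symm hik) (Ne.symm hjk) hij)
        = g (mkE j i k (Ne.symm hij) hjk hik) - g (mkE i j k hij hik hjk))
    (h₀ : ∀ k (hk : Fin.last (n + 1) ≠ k), ∃ a, ∃ (ha : a ≠ Fin.last (n + 1)) (hak : a ≠ k),
      g (mkE a (Fin.last (n + 1)) k ha hak hk) = 0)
    (e : JE n) : g e = 0 := by
  have h_to_last : ∀ a k (ha : a ≠ Fin.last (n + 1)) (hak : a ≠ k) (hk : Fin.last (n + 1) ≠ k),
      g (mkE a (Fin.last (n + 1)) k ha hak hk) = 0 := by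
    intro a k ha hak hk
    obtain ⟨b, hb, hbk, hgb⟩ := h₀ k hk
    rw [h₂ _ b a k hb.symm ha.symm hk hbk hak, hgb]
  have h_from_last : ∀ j k (hj : Fin.last (n + 1) ≠ j) (hk : Fin.last (n + 1) ≠ k) (hjk : j ≠ k),
      g (mkE (Fin.last (n + 1)) j k hj hk hjk) = 0 := by
    intro j k hj hk hjk
    have := h₃ _ j k hj hk hjk
    rw [h_to_last, h_to_last] at this
    linarith
  obtain ⟨i, j, k, hij, hik, hjk, rfl⟩ := e.exists_eq_mkE
  rcases eq_or_ne j (Fin.last (n + 1)) with rfl | hj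
  · exact h_to_last i k hij hik hjk
  rcases eq_or_ne k (Fin.last (n + 1)) with rfl | hk
  · rw [h₃ j _ i hjk (Ne.symm hij) (Ne.symm hik), h_from_last, h_to_last, sub_zero]
  rw [h₂ j _ i k hj (Ne.symm hij) hjk (Ne.symm hk) hik]
  exact h_from_last j k (Ne.symm hj) (Ne.symm hk) hjk

theorem avec_castSucc {n : ℕ} (B : Module.Basis (Fin (n + 1)) ℤ (Fin (n + 1) → ℤ))
    (t : Fin (n + 1)) : avec B t.castSucc = B t := by
  rw [avec, dif_pos (show (t.castSucc : ℕ) < n + 1 from t.isLt)]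
  rfl

theorem avec_last {n : ℕ} (B : Module.Basis (Fin (n + 1)) ℤ (Fin (n + 1) → ℤ)) :
    avec B (Fin.last (n + 1)) = 0 := by
  simp [avec]

namespace Grassmannian

variable {n : ℕ} {B : Module.Basis (Fin (n + 1)) ℤ (Fin (n + 1) → ℤ)}
  {C : GKMCore (JV n) (JE n) (2 * n)} {A : AxialOn C (n + 1)}

theorem α_mkE_last
    (hα : ∀ (i j k : Fin (n + 2)) (hij : i ≠ j) (hik : i ≠ k) (hjk : j ≠ k),
      A.α (mkE i j k hij hik hjk) = avec B k - avec B j)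
    (a : Fin (n + 2)) (t : Fin (n + 1)) (ha : a ≠ Fin.last (n + 1)) (hat : a ≠ t.castSucc) :
    A.α (mkE a (Fin.last (n + 1)) t.castSucc ha hat (Fin.castSucc_ne_last t).symm) = B t := by
  rw [hα, avec_castSucc, avec_last, sub_zero]

theorem span_range_α_eq_top (hn : 1 ≤ n)
    (hα : ∀ (i j k : Fin (n + 2)) (hij : i ≠ j) (hik : i ≠ k) (hjk : j ≠ k),
      A.α (mkE i j k hij hik hjk) = avec B k - avec B j) :
    Submodule.span ℤ (Set.range A.α) = ⊤ := by
  refine eq_top_iff.2 (B.span_eq ▸ Submodule.span_mono ?_)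
  rintro _ ⟨t, rfl⟩
  obtain ⟨a, hat, ha⟩ :=
    Fin.exists_ne_and_ne_of_two_lt t.castSucc (Fin.last (n + 1)) (by omega)
  exact ⟨_, α_mkE_last hα a t ha hat⟩

theorem src_mkE_swap (hsrc : ∀ e, C.src e = e.1.1) {i j k l : Fin (n + 2)} (hij : i ≠ j)
    (hik : i ≠ k) (hjk : j ≠ k) (hil : i ≠ l) (hjl : j ≠ l) :
    C.src (mkE j i l (Ne.symm hij) hjl hil) = C.src (mkE i j k hij hik hjk) := by
  rw [hsrc, hsrc]
  exact Subtype.ext (Finset.pair_comm j i)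

theorem _root_.AxialOn.IsEdgeAxial.mkE_anchor_eq (hsrc : ∀ e, C.src e = e.1.1)
    (hα : ∀ (i j k : Fin (n + 2)) (hij : i ≠ j) (hik : i ≠ k) (hjk : j ≠ k),
      A.α (mkE i j k hij hik hjk) = avec B k - avec B j)
    (hconn₂ : ∀ (i j k l : Fin (n + 2)) (hij : i ≠ j) (hik : i ≠ k) (hjk : j ≠ k)
      (hil : i ≠ l) (hjl : j ≠ l) (hkl : k ≠ l),
      C.conn (mkE i j k hij hik hjk) (mkE j i l (Ne.symm hij) hjl hil)
        = mkE k i l (Ne.symm hik) hkl hil)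
    {g : JE n → ℤ} (hg : A.IsEdgeAxial g)
    (i j k l : Fin (n + 2)) (hij : i ≠ j) (hik : i ≠ k) (hil : i ≠ l) (hjl : j ≠ l)
    (hkl : k ≠ l) :
    g (mkE k i l (Ne.symm hik) hkl hil) = g (mkE j i l (Ne.symm hij) hjl hil) := by
  rcases eq_or_ne j k with rfl | hjk
  · rfl
  have h := hg.apply_conn_of_α_conn (src_mkE_swap hsrc hij hik hjk hil hjl) (c := 0)
    (by rw [hconn₂ i j k l hij hik hjk hil hjl hkl, hα, hα, zero_smul, add_zero])
  rwa [hconn₂, mul_zero, add_zero] at h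

theorem _root_.AxialOn.IsEdgeAxial.mkE_cocycle (hsrc : ∀ e, C.src e = e.1.1)
    (hα : ∀ (i j k : Fin (n + 2)) (hij : i ≠ j) (hik : i ≠ k) (hjk : j ≠ k),
      A.α (mkE i j k hij hik hjk) = avec B k - avec B j)
    (hconn₃ : ∀ (i j k : Fin (n + 2)) (hij : i ≠ j) (hik : i ≠ k) (hjk : j ≠ k),
      C.conn (mkE i j k hij hik hjk) (mkE j i k (Ne.symm hij) hjk hik)
        = mkE k i j (Ne.symm hik) (Ne.symm hjk) hij)
    {g : JE n → ℤ} (hg : A.IsEdgeAxial g)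
    (i j k : Fin (n + 2)) (hij : i ≠ j) (hik : i ≠ k) (hjk : j ≠ k) :
    g (mkE k i j (Ne.symm hik) (Ne.symm hjk) hij)
      = g (mkE j i k (Ne.symm hij) hjk hik) - g (mkE i j k hij hik hjk) := by
  have h := hg.apply_conn_of_α_conn (src_mkE_swap hsrc hij hik hjk hik hjk) (c := -1)
    (by rw [hconn₃, hα, hα, hα]; module)
  rw [hconn₃] at h
  linarith

theorem axialOfDual_surjective (hn : 1 ≤ n) (hsrc : ∀ e, C.src e = e.1.1)
    (hα : ∀ (i j k : Fin (n + 2)) (hij : i ≠ j) (hik : i ≠ k) (hjk : j ≠ k),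
      A.α (mkE i j k hij hik hjk) = avec B k - avec B j)
    (hconn₂ : ∀ (i j k l : Fin (n + 2)) (hij : i ≠ j) (hik : i ≠ k) (hjk : j ≠ k)
      (hil : i ≠ l) (hjl : j ≠ l) (hkl : k ≠ l),
      C.conn (mkE i j k hij hik hjk) (mkE j i l (Ne.symm hij) hjl hil)
        = mkE k i l (Ne.symm hik) hkl hil)
    (hconn₃ : ∀ (i j k : Fin (n + 2)) (hij : i ≠ j) (hik : i ≠ k) (hjk : j ≠ k),
      C.conn (mkE i j k hij hik hjk) (mkE j i k (Ne.symm hij) hjk hik)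
        = mkE k i j (Ne.symm hik) (Ne.symm hjk) hij) :
    Function.Surjective A.axialOfDual := by
  rintro ⟨f, hf⟩
  set g := C.edgeEquiv f
  choose a ha hat using fun t : Fin (n + 1) =>
    Fin.exists_ne_and_ne_of_two_lt (Fin.last (n + 1)) t.castSucc (by omega)
  set φ := B.constr ℤ fun t =>
    g (mkE (a t) (Fin.last (n + 1)) t.castSucc (ha t) (hat t) (Fin.castSucc_ne_last t).symm)
  have hd : A.IsEdgeAxial (g - fun e => φ (A.α e)) :=
    ((A.isAxialClass_iff_isEdgeAxial f).1 hf).sub (A.isEdgeAxial_dual_comp φ)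
  have hd₀ := JE.eq_zero_of_relations (hd.mkE_anchor_eq hsrc hα hconn₂)
    (hd.mkE_cocycle hsrc hα hconn₃) ?_
  · refine ⟨φ, Subtype.ext ((C.edgeEquiv.symm_apply_eq).2 ?_)⟩
    funext e
    exact (sub_eq_zero.1 (hd₀ e)).symm
  · intro k hk
    obtain ⟨t, rfl⟩ := Fin.exists_castSucc_eq.2 hk.symm
    refine ⟨a t, ha t, hat t, ?_⟩
    rw [Pi.sub_apply, α_mkE_last hα, Module.Basis.constr_basis, sub_self]

end Grassmannian

theorem grassmannian_axialModule_iso_general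
    (n : ℕ) (hn : 1 ≤ n) (B : Module.Basis (Fin (n + 1)) ℤ (Fin (n + 1) → ℤ))
    (C : GKMCore (JV n) (JE n) (2 * n))
    (hsrc : ∀ e, C.src e = e.1.1)
    (A : AxialOn C (n + 1))
    (hα : ∀ (i j k : Fin (n + 2)) (hij : i ≠ j) (hik : i ≠ k) (hjk : j ≠ k),
      A.α (mkE i j k hij hik hjk) = avec B k - avec B j)
    (hconn₂ : ∀ (i j k l : Fin (n + 2)) (hij : i ≠ j) (hik : i ≠ k) (hjk : j ≠ k)
      (hil : i ≠ l) (hjl : j ≠ l) (hkl : k ≠ l),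
      C.conn (mkE i j k hij hik hjk) (mkE j i l (Ne.symm hij) hjl hil)
        = mkE k i l (Ne.symm hik) hkl hil)
    (hconn₃ : ∀ (i j k : Fin (n + 2)) (hij : i ≠ j) (hik : i ≠ k) (hjk : j ≠ k),
      C.conn (mkE i j k hij hik hjk) (mkE j i k (Ne.symm hij) hjk hik)
        = mkE k i j (Ne.symm hik) (Ne.symm hjk) hij) :
    Nonempty (A.axialModule ≃ₗ[ℤ] (Fin (n + 1) → ℤ)) :=
  ⟨(LinearEquiv.ofBijective A.axialOfDual
      ⟨A.axialOfDual_injective (Grassmannian.span_range_α_eq_top hn hα),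
        Grassmannian.axialOfDual_surjective hn hsrc hα hconn₂ hconn₃⟩).symm.trans
    (B.constr ℤ).symm⟩

/-- for the GKM graph of the complex Grassmannian `G₂(ℂ^{n+2})`
(the Johnson graph `J(n+2,2)` with axial function
`α_n(E_{i,j}^{i,k}) = −a_j + a_k` and its unique connection), the group of
axial functions is isomorphic to `ℤ^{n+1}`. -/
theorem grassmannian_axialModule_iso
    (n : ℕ) (hn : 1 ≤ n) (B : Module.Basis (Fin (n + 1)) ℤ (Fin (n + 1) → ℤ))
    (C : GKMCore (JV n) (JE n) (2 * n))
    (hsrc : ∀ e, C.src e = e.1.1) (htgt : ∀ e, C.tgt e = e.1.2)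
    (hrev : ∀ e, (C.rev e).1 = (e.1.2, e.1.1))
    (A : AxialOn C (n + 1))
    (hα : ∀ (i j k : Fin (n + 2)) (hij : i ≠ j) (hik : i ≠ k) (hjk : j ≠ k),
      A.α (mkE i j k hij hik hjk) = avec B k - avec B j)
    (hconn₁ : ∀ (i j k l : Fin (n + 2)) (hij : i ≠ j) (hik : i ≠ k) (hjk : j ≠ k)
      (hil : i ≠ l) (hjl : j ≠ l) (hkl : k ≠ l),
      C.conn (mkE i j k hij hik hjk) (mkE i j l hij hil hjl)
        = mkE i k l hik hil hkl)
    (hconn₂ : ∀ (i j k l : Fin (n + 2)) (hij : i ≠ j) (hik : i ≠ k) (hjk : j ≠ k)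
      (hil : i ≠ l) (hjl : j ≠ l) (hkl : k ≠ l),
      C.conn (mkE i j k hij hik hjk) (mkE j i l (Ne.symm hij) hjl hil)
        = mkE k i l (Ne.symm hik) hkl hil)
    (hconn₃ : ∀ (i j k : Fin (n + 2)) (hij : i ≠ j) (hik : i ≠ k) (hjk : j ≠ k),
      C.conn (mkE i j k hij hik hjk) (mkE j i k (Ne.symm hij) hjk hik)
        = mkE k i j (Ne.symm hik) (Ne.symm hjk) hij) :
    Nonempty (A.axialModule ≃ₗ[ℤ] (Fin (n + 1) → ℤ)) :=
  grassmannian_axialModule_iso_general n hn B C hsrc A hα hconn₂ hconn₃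
end
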